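/- Let σ, ν, μ be Minkowski velocities with ⟨σ,ν+σ⟩ ≠ 0, and set β := Lp(σ,ν)μ. Then the scalar products of the boosted velocity satisfy ⟨β,σ⟩ = ⟨μ,ν⟩ and ⟨β,ν⟩ = 2⟨μ,ν⟩⟨ν,σ⟩/c² − ⟨μ,σ⟩. -/

import Mathlib

/-!
Pairing the boost with `σ` or `ν` pairs the direction `ν + σ` with `σ` or `ν`; by symmetry and
`⟨σ,σ⟩ = ⟨ν,ν⟩` both pairings equal the denominator `⟨σ, ν + σ⟩`, so the quotient cancels and
only linear algebra in `⟨μ,ν⟩`, `⟨μ,σ⟩` remains.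
-/

noncomputable section

/-- Minkowski bilinear form on ℝ⁴ with signature +−−−. -/
def mink (u v : Fin 4 → ℝ) : ℝ := u 0 * v 0 - u 1 * v 1 - u 2 * v 2 - u 3 * v 3

/-- Passive covariant Lorentz boost determined by Minkowski velocities σ, ν. -/
def Lp (c : ℝ) (σ ν μ : Fin 4 → ℝ) : Fin 4 → ℝ :=
  μ - (mink μ (ν + σ) / mink σ (ν + σ)) • (ν + σ) + (2 * mink μ ν / c ^ 2) • σ

namespace LinearMap.BilinForm

variable {K V : Type*} [Field K] [AddCommGroup V] [Module K V] {B : LinearMap.BilinForm K V}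

variable (B) in
def boost (q : K) (σ ν μ : V) : V :=
  μ - (B μ (ν + σ) / B σ (ν + σ)) • (ν + σ) + (2 * B μ ν / q) • σ

theorem boost_apply (q : K) (σ ν μ w : V) :
    B (B.boost q σ ν μ) w =
      B μ w - B μ (ν + σ) / B σ (ν + σ) * B (ν + σ) w + 2 * B μ ν / q * B σ w := by
  simp only [boost, map_add, map_sub, map_smul, LinearMap.add_apply, LinearMap.sub_apply,
    LinearMap.smul_apply, smul_eq_mul]

theorem IsSymm.apply_boost_left (hB : B.IsSymm) {q : K} (hq : q ≠ 0) {σ ν : V}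
    (hσ : B σ σ = q) (hσν : B σ (ν + σ) ≠ 0) (μ : V) :
    B (B.boost q σ ν μ) σ = B μ ν := by
  rw [boost_apply, hB.eq (ν + σ) σ, div_mul_cancel₀ _ hσν, hσ, map_add]
  field_simp
  ring

theorem IsSymm.apply_boost_right (hB : B.IsSymm) (q : K) {σ ν : V}
    (hνσ : B ν ν = B σ σ) (hσν : B σ (ν + σ) ≠ 0) (μ : V) :
    B (B.boost q σ ν μ) ν = 2 * B μ ν * B ν σ / q - B μ σ := by
  have hsum : B (ν + σ) ν = B σ (ν + σ) := by
    rw [map_add, map_add, LinearMap.add_apply, hνσ, hB.eq σ ν, add_comm]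
  rw [boost_apply, hsum, div_mul_cancel₀ _ hσν, map_add, hB.eq σ ν]
  ring

end LinearMap.BilinForm

def minkowskiForm : LinearMap.BilinForm ℝ (Fin 4 → ℝ) :=
  LinearMap.mk₂ ℝ mink
    (fun u v w => by simp only [mink, Pi.add_apply]; ring)
    (fun a u v => by simp only [mink, Pi.smul_apply, smul_eq_mul]; ring)
    (fun u v w => by simp only [mink, Pi.add_apply]; ring)
    (fun a u v => by simp only [mink, Pi.smul_apply, smul_eq_mul]; ring)

theorem minkowskiForm_apply (u v : Fin 4 → ℝ) : minkowskiForm u v = mink u v := rfl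

theorem isSymm_minkowskiForm : minkowskiForm.IsSymm :=
  ⟨fun u v => by simp only [minkowskiForm_apply, mink]; ring⟩

theorem Lp_eq_boost (c : ℝ) (σ ν μ : Fin 4 → ℝ) :
    Lp c σ ν μ = minkowskiForm.boost (c ^ 2) σ ν μ := rfl

theorem boosted_scalar_products_general (c : ℝ) (hc : 0 < c) (σ ν μ : Fin 4 → ℝ)
    (hσ : mink σ σ = c ^ 2) (hν : mink ν ν = c ^ 2)
    (hσνσ : mink σ (ν + σ) ≠ 0)
    (β : Fin 4 → ℝ) (hβ : β = Lp c σ ν μ) :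
    mink β σ = mink μ ν ∧
      mink β ν = 2 * mink μ ν * mink ν σ / c ^ 2 - mink μ σ := by
  subst hβ
  rw [Lp_eq_boost]
  exact ⟨isSymm_minkowskiForm.apply_boost_left (by positivity) hσ hσνσ μ,
    isSymm_minkowskiForm.apply_boost_right _ (hν.trans hσ.symm) hσνσ μ⟩

theorem boosted_scalar_products (c : ℝ) (hc : 0 < c) (σ ν μ : Fin 4 → ℝ)
    (hσ : mink σ σ = c ^ 2) (hν : mink ν ν = c ^ 2) (hμ : mink μ μ = c ^ 2)
    (hσνσ : mink σ (ν + σ) ≠ 0)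
    (β : Fin 4 → ℝ) (hβ : β = Lp c σ ν μ) :
    mink β σ = mink μ ν ∧
      mink β ν = 2 * mink μ ν * mink ν σ / c ^ 2 - mink μ σ :=
  boosted_scalar_products_general c hc σ ν μ hσ hν hσνσ β hβ
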